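/- Let X, Y be real-valued random variables, neither almost surely constant, with mid distribution functions F̄, Ḡ. Define CMA(X,Y) = (1/2)(Cov(F̄(X),Ḡ(Y))/Var(Ḡ(Y)) + 1). Then CMA(X,Y) = E[(Ḡ(Y'') − Ḡ(Y')) 1{Y' < Y''} s(X',X'')] / E[(Ḡ(Y'') − Ḡ(Y')) 1{Y' < Y''}], where (X',Y'), (X'',Y'') are independent copies of (X,Y) and s(a,b) = 1{a<b} + (1/2)1{a=b}. -/

import Mathlib

open MeasureTheory ProbabilityTheory
open scoped ENNReal NNReal Topology

noncomputable section

variable {Ω : Type*} [MeasurableSpace Ω]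

/-- Mid distribution function of `X` under `μ`: `F̄(x) = P(X < x) + (1/2) P(X = x)`. -/
def mdf (μ : Measure Ω) (X : Ω → ℝ) (x : ℝ) : ℝ :=
  (μ {ω | X ω < x}).toReal + (1 / 2) * (μ {ω | X ω = x}).toReal

/-- Covariance of two real random variables under `μ`. -/
def covar (μ : Measure Ω) (f g : Ω → ℝ) : ℝ :=
  (∫ ω, f ω * g ω ∂μ) - (∫ ω, f ω ∂μ) * (∫ ω, g ω ∂μ)

/-- Similarity function `s(a,b) = 1{a < b} + (1/2) 1{a = b}`. -/
def simFun (a b : ℝ) : ℝ :=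
  (if a < b then 1 else 0) + (1 / 2) * (if a = b then 1 else 0)

/-- Granularity `γ(X) = P(X = X' = X'')` for i.i.d. copies of `X`. -/
def gran (μ : Measure Ω) (X : Ω → ℝ) : ℝ :=
  ((μ.prod (μ.prod μ)) {ω | X ω.1 = X ω.2.1 ∧ X ω.2.1 = X ω.2.2}).toReal

/-- Asymmetric grade correlation `AGC(U,V) = Cov(F̄_U(U), Ḡ_V(V)) / Var(Ḡ_V(V))`. -/
def agc (μ : Measure Ω) (U V : Ω → ℝ) : ℝ :=
  covar μ (fun ω => mdf μ U (U ω)) (fun ω => mdf μ V (V ω)) /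
    covar μ (fun ω => mdf μ V (V ω)) (fun ω => mdf μ V (V ω))

/-- Coefficient of monotone association `CMA(U,V) = (AGC(U,V) + 1) / 2`. -/
def cma (μ : Measure Ω) (U V : Ω → ℝ) : ℝ := (agc μ U V + 1) / 2

/-- `X` is not almost surely constant. -/
def Nondeg (μ : Measure Ω) (X : Ω → ℝ) : Prop := ¬ ∃ c : ℝ, X =ᵐ[μ] fun _ => c

/-- Pearson correlation. -/
def pcor (μ : Measure Ω) (f g : Ω → ℝ) : ℝ :=
  covar μ f g / (Real.sqrt (covar μ f f) * Real.sqrt (covar μ g g))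

/-- Quantile function (generalized inverse of the CDF). -/
def qf (μ : Measure Ω) (Y : Ω → ℝ) (α : ℝ) : ℝ :=
  sInf {y : ℝ | α ≤ (μ {ω | Y ω ≤ y}).toReal}



lemma simFun_add (a b : ℝ) : simFun a b + simFun b a = 1 := by
  unfold simFun
  rcases lt_trichotomy a b with h | h | h
  · rw [if_pos h, if_neg (not_lt.2 h.le), if_neg h.ne, if_neg h.ne']; ring
  · subst h; rw [if_neg (lt_irrefl a), if_pos rfl]; ring
  · rw [if_neg (not_lt.2 h.le), if_pos h, if_neg h.ne', if_neg h.ne]; ring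

lemma simFun_nonneg (a b : ℝ) : 0 ≤ simFun a b := by
  unfold simFun; positivity

lemma simFun_le_one (a b : ℝ) : simFun a b ≤ 1 := by
  have h := simFun_add a b
  have := simFun_nonneg b a
  linarith

lemma abs_simFun_le (a b : ℝ) : |simFun a b| ≤ 1 := by
  rw [abs_le]; constructor
  · linarith [simFun_nonneg a b]
  · exact simFun_le_one a b

lemma bdd_integrable {α : Type*} [MeasurableSpace α] (ν : Measure α) [IsFiniteMeasure ν]
    {f : α → ℝ} (hf : Measurable f) {C : ℝ} (h : ∀ a, |f a| ≤ C) : Integrable f ν :=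
  (integrable_const C).mono' hf.aestronglyMeasurable (Filter.Eventually.of_forall h)

variable {μ : Measure Ω} [IsProbabilityMeasure μ] {Y : Ω → ℝ}

lemma measurable_simFun : Measurable (fun q : ℝ × ℝ => simFun q.1 q.2) := by
  unfold simFun
  apply Measurable.add
  · exact Measurable.ite (measurableSet_lt measurable_fst measurable_snd)
      measurable_const measurable_const
  · exact (Measurable.ite (measurableSet_eq_fun measurable_fst measurable_snd)
      measurable_const measurable_const).const_mul _

lemma mdf_eq_integral (hY : Measurable Y) (y : ℝ) :
    mdf μ Y y = ∫ ω, simFun (Y ω) y ∂μ := by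
  have h1 : MeasurableSet {ω | Y ω < y} := measurableSet_lt hY measurable_const
  have h2 : MeasurableSet {ω | Y ω = y} := hY (measurableSet_singleton y)
  rw [show (fun ω => simFun (Y ω) y) = fun ω =>
      ({ω | Y ω < y}.indicator (1 : Ω → ℝ) ω) +
      (1/2) * ({ω | Y ω = y}.indicator (1 : Ω → ℝ) ω) by
    funext ω; by_cases ha : Y ω < y <;> by_cases hb : Y ω = y <;>
      simp [simFun, ha, hb, Set.indicator]]
  rw [integral_add, integral_const_mul, integral_indicator_one h1, integral_indicator_one h2]
  · rfl
  · exact (integrable_indicator_iff h1).2 (integrableOn_const (measure_ne_top μ _))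
  · exact ((integrable_indicator_iff h2).2
      (integrableOn_const (measure_ne_top μ _))).const_mul _

lemma mdf_eq_integral' (hY : Measurable Y) (y : ℝ) :
    ∫ ω, simFun y (Y ω) ∂μ = 1 - mdf μ Y y := by
  have : ∀ ω, simFun y (Y ω) = 1 - simFun (Y ω) y := by
    intro ω; have := simFun_add (Y ω) y; linarith
  rw [show (fun ω => simFun y (Y ω)) = fun ω => 1 - simFun (Y ω) y by funext ω; exact this ω]
  rw [integral_sub (integrable_const 1), integral_const, mdf_eq_integral hY]
  · simp
  · exact bdd_integrable μ (measurable_simFun.comp (hY.prodMk measurable_const))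
      (fun a => abs_simFun_le _ _)

variable {μ : Measure Ω} [IsProbabilityMeasure μ] {Y : Ω → ℝ}

lemma mdf_eq_half (hY : Measurable Y) (y : ℝ) :
    mdf μ Y y = ((μ {ω | Y ω < y}).toReal + (μ {ω | Y ω ≤ y}).toReal) / 2 := by
  have hd : {ω | Y ω ≤ y} = {ω | Y ω < y} ∪ {ω | Y ω = y} := by
    ext ω; simp [le_iff_lt_or_eq]
  have h2 : MeasurableSet {ω | Y ω = y} := hY (measurableSet_singleton y)
  have hdis : Disjoint {ω | Y ω < y} {ω | Y ω = y} := by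
    rw [Set.disjoint_left]; intro ω h1 h2; exact absurd h2 (ne_of_lt h1)
  rw [mdf, hd, measure_union hdis h2, ENNReal.toReal_add (measure_ne_top μ _) (measure_ne_top μ _)]
  ring

lemma mdf_nonneg (y : ℝ) : 0 ≤ mdf μ Y y := by
  unfold mdf; positivity

lemma mdf_le_cdf (hY : Measurable Y) (y : ℝ) : mdf μ Y y ≤ (μ {ω | Y ω ≤ y}).toReal := by
  rw [mdf_eq_half hY]
  have : (μ {ω | Y ω < y}).toReal ≤ (μ {ω | Y ω ≤ y}).toReal :=
    ENNReal.toReal_mono (measure_ne_top μ _) (measure_mono (Set.setOf_subset_setOf.2 (fun ω => le_of_lt)))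
  linarith

lemma cdf_le_mdf (hY : Measurable Y) {t y : ℝ} (h : t < y) :
    (μ {ω | Y ω ≤ t}).toReal ≤ mdf μ Y y := by
  rw [mdf_eq_half hY]
  have h1 : (μ {ω | Y ω ≤ t}).toReal ≤ (μ {ω | Y ω < y}).toReal :=
    ENNReal.toReal_mono (measure_ne_top μ _) (measure_mono (Set.setOf_subset_setOf.2 (fun ω hw => lt_of_le_of_lt hw h)))
  have h2 : (μ {ω | Y ω ≤ t}).toReal ≤ (μ {ω | Y ω ≤ y}).toReal :=
    ENNReal.toReal_mono (measure_ne_top μ _) (measure_mono (Set.setOf_subset_setOf.2 (fun ω hw => le_trans hw h.le)))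
  linarith

lemma mdf_le_one (hY : Measurable Y) (y : ℝ) : mdf μ Y y ≤ 1 := by
  have h1 : (μ {ω | Y ω < y}).toReal ≤ 1 := by
    rw [← ENNReal.toReal_one]
    exact ENNReal.toReal_mono ENNReal.one_ne_top (prob_le_one)
  have h2 : (μ {ω | Y ω = y}).toReal ≤ 1 := by
    rw [← ENNReal.toReal_one]
    exact ENNReal.toReal_mono ENNReal.one_ne_top (prob_le_one)
  have h3 : (0:ℝ) ≤ (μ {ω | Y ω = y}).toReal := ENNReal.toReal_nonneg
  have hd : (μ {ω | Y ω < y}).toReal + (μ {ω | Y ω = y}).toReal ≤ 1 := by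
    rw [← ENNReal.toReal_add (measure_ne_top μ _) (measure_ne_top μ _), ← ENNReal.toReal_one]
    refine ENNReal.toReal_mono ENNReal.one_ne_top ?_
    have hdis : Disjoint {ω | Y ω < y} {ω | Y ω = y} := by
      rw [Set.disjoint_left]; intro ω ha hb; exact absurd hb (ne_of_lt ha)
    calc μ {ω | Y ω < y} + μ {ω | Y ω = y}
        = μ ({ω | Y ω < y} ∪ {ω | Y ω = y}) :=
          (measure_union hdis (hY (measurableSet_singleton y))).symm
      _ ≤ 1 := prob_le_one
  unfold mdf; linarith

lemma abs_mdf_le (hY : Measurable Y) (y : ℝ) : |mdf μ Y y| ≤ 1 :=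
  abs_le.2 ⟨by linarith [mdf_nonneg (μ := μ) (Y := Y) y], mdf_le_one hY y⟩

lemma mdf_mono (hY : Measurable Y) : Monotone (mdf μ Y) := by
  intro y1 y2 h
  rw [mdf_eq_half hY, mdf_eq_half hY]
  have h1 : (μ {ω | Y ω < y1}).toReal ≤ (μ {ω | Y ω < y2}).toReal :=
    ENNReal.toReal_mono (measure_ne_top μ _) (measure_mono (Set.setOf_subset_setOf.2 (fun ω hw => lt_of_lt_of_le hw h)))
  have h2 : (μ {ω | Y ω ≤ y1}).toReal ≤ (μ {ω | Y ω ≤ y2}).toReal :=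
    ENNReal.toReal_mono (measure_ne_top μ _) (measure_mono (Set.setOf_subset_setOf.2 (fun ω hw => le_trans hw h)))
  linarith

lemma mdf_measurable (hY : Measurable Y) : Measurable (mdf μ Y) :=
  (mdf_mono hY).measurable

section C

lemma swap_int (f : Ω × Ω → ℝ) :
    ∫ p, f (p.2, p.1) ∂(μ.prod μ) = ∫ p, f p ∂(μ.prod μ) := by
  simpa [Prod.swap] using MeasureTheory.integral_prod_swap (μ := μ) (ν := μ) f

lemma fub (f : Ω × Ω → ℝ) (hf : Measurable f) {C : ℝ} (hb : ∀ p, |f p| ≤ C) :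
    ∫ p, f p ∂(μ.prod μ) = ∫ x, ∫ y, f (x, y) ∂μ ∂μ :=
  integral_prod f (bdd_integrable _ hf hb)

lemma abs_mul_le_one {u v : ℝ} (hu : |u| ≤ 1) (hv : |v| ≤ 1) : |u * v| ≤ 1 := by
  rw [abs_mul]
  calc |u| * |v| ≤ 1 * 1 := mul_le_mul hu hv (abs_nonneg v) zero_le_one
  _ = 1 := one_mul 1

lemma atom1 {g : Ω → ℝ} (hg : Measurable g) (hgb : ∀ x, |g x| ≤ 1) (hZ : Measurable Z) :
    ∫ p, g p.1 * simFun (Z p.2) (Z p.1) ∂(μ.prod μ) = ∫ x, g x * mdf μ Z (Z x) ∂μ := by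
  rw [fub (fun p => g p.1 * simFun (Z p.2) (Z p.1))
    (by exact (hg.comp measurable_fst).mul (measurable_simFun.comp
      ((hZ.comp measurable_snd).prodMk (hZ.comp measurable_fst))))
    (fun p => abs_mul_le_one (hgb p.1) (abs_simFun_le _ _))]
  refine integral_congr_ae (Filter.Eventually.of_forall fun x => ?_)
  show ∫ y, g x * simFun (Z y) (Z x) ∂μ = g x * mdf μ Z (Z x)
  rw [MeasureTheory.integral_const_mul, ← mdf_eq_integral hZ]

lemma atom2 {g : Ω → ℝ} (hg : Measurable g) (hgb : ∀ x, |g x| ≤ 1) (hZ : Measurable Z) :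
    ∫ p, g p.1 * simFun (Z p.1) (Z p.2) ∂(μ.prod μ) = ∫ x, g x * (1 - mdf μ Z (Z x)) ∂μ := by
  rw [fub (fun p => g p.1 * simFun (Z p.1) (Z p.2))
    (by exact (hg.comp measurable_fst).mul (measurable_simFun.comp
      ((hZ.comp measurable_fst).prodMk (hZ.comp measurable_snd))))
    (fun p => abs_mul_le_one (hgb p.1) (abs_simFun_le _ _))]
  refine integral_congr_ae (Filter.Eventually.of_forall fun x => ?_)
  show ∫ y, g x * simFun (Z x) (Z y) ∂μ = g x * (1 - mdf μ Z (Z x))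
  rw [MeasureTheory.integral_const_mul, mdf_eq_integral' hZ]

lemma mdf_self_integral (hZ : Measurable Z) : ∫ x, mdf μ Z (Z x) ∂μ = 1/2 := by
  have h1 := atom1 (μ := μ) measurable_one (fun x => by norm_num) hZ
  have h2 := atom2 (μ := μ) measurable_one (fun x => by norm_num) hZ
  simp only [Pi.one_apply, one_mul] at h1 h2
  have hs : ∫ p, simFun (Z p.2) (Z p.1) ∂(μ.prod μ) = ∫ p, simFun (Z p.1) (Z p.2) ∂(μ.prod μ) :=
    swap_int (fun p => simFun (Z p.1) (Z p.2))
  have hone : (∫ (x : Ω), (1:ℝ) ∂μ) = 1 := by simp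
  have h3 : ∫ x, (1 - mdf μ Z (Z x)) ∂μ = 1 - ∫ x, mdf μ Z (Z x) ∂μ := by
    have := MeasureTheory.integral_sub (μ := μ) (f := fun _ => (1:ℝ))
      (g := fun x => mdf μ Z (Z x)) (integrable_const 1)
      (bdd_integrable μ (by exact (mdf_measurable hZ).comp hZ) (fun x => abs_mdf_le hZ _))
    simpa using this
  rw [hs, h2, h3] at h1
  linarith
end C

section D

lemma cdf_mono {s t : ℝ} (h : s ≤ t) : μ {ω | Y ω ≤ s} ≤ μ {ω | Y ω ≤ t} :=
  measure_mono (Set.setOf_subset_setOf.2 fun ω hw => le_trans hw h)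

lemma exists_dev (hY : Measurable Y) (hYnd : Nondeg μ Y) :
    ∃ (A : Set Ω) (ε : ℝ), MeasurableSet A ∧ μ A ≠ 0 ∧ 0 < ε ∧
      ∀ ω ∈ A, ε ≤ |mdf μ Y (Y ω) - 1/2| := by
  classical
  set q : ℝ → ℝ := fun t => (μ {ω | Y ω ≤ t}).toReal with hqdef
  have hqle1 : ∀ t, q t ≤ 1 := fun t => by
    rw [hqdef]; rw [← ENNReal.toReal_one]
    exact ENNReal.toReal_mono ENNReal.one_ne_top prob_le_one
  by_cases hcase : ∀ t, q t = 0 ∨ q t = 1/2 ∨ q t = 1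
  · -- Case B : CDF only takes values 0, 1/2, 1
    have hex1 : ∃ n : ℕ, μ {ω | Y ω ≤ (n:ℝ)} = 1 := by
      have hmono : Monotone (fun n : ℕ => {ω | Y ω ≤ (n:ℝ)}) := fun m n h =>
        Set.setOf_subset_setOf.2 fun ω hw => le_trans hw (by exact_mod_cast h)
      have hU : (⋃ n : ℕ, {ω | Y ω ≤ (n:ℝ)}) = Set.univ := by
        ext ω
        simp only [Set.mem_iUnion, Set.mem_univ, iff_true, Set.mem_setOf_eq]
        exact exists_nat_ge (Y ω)
      have ht := tendsto_measure_iUnion_atTop (μ := μ) hmono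
      rw [hU, measure_univ] at ht
      have hev : ∀ᶠ n : ℕ in Filter.atTop, (1:ℝ≥0∞)/2 < μ {ω | Y ω ≤ (n:ℝ)} :=
        ht.eventually (eventually_gt_nhds (by norm_num))
      obtain ⟨n, hn⟩ := hev.exists
      have hq : 1/2 < q n := by
        rw [hqdef]
        have := (ENNReal.toReal_lt_toReal (by norm_num) (measure_ne_top μ _)).2 hn
        simpa using this
      rcases hcase n with h | h | h
      · exfalso; rw [h] at hq; norm_num at hq
      · exfalso; rw [h] at hq; norm_num at hq
      · exact ⟨n, (ENNReal.toReal_eq_one_iff _).1 h⟩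
    set S : Set ℝ := {t | μ {ω | Y ω ≤ t} = 1} with hSdef
    have hSne : S.Nonempty := by obtain ⟨n, hn⟩ := hex1; exact ⟨n, hn⟩
    have hexm : ∃ m : ℕ, μ {ω | Y ω ≤ -(m:ℝ)} < 1 := by
      have hanti : Antitone (fun n : ℕ => {ω | Y ω ≤ -(n:ℝ)}) := fun m n h =>
        Set.setOf_subset_setOf.2 fun ω hw => le_trans hw (by exact_mod_cast neg_le_neg (by exact_mod_cast h))
      have hI : (⋂ n : ℕ, {ω | Y ω ≤ -(n:ℝ)}) = ∅ := by
        ext ω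
        simp only [Set.mem_iInter, Set.mem_empty_iff_false, iff_false, not_forall, Set.mem_setOf_eq]
        obtain ⟨n, hn⟩ := exists_nat_gt (-(Y ω))
        exact ⟨n, by push_neg; linarith⟩
      have ht := tendsto_measure_iInter_atTop (μ := μ)
        (s := fun n : ℕ => {ω | Y ω ≤ -(n:ℝ)})
        (fun n => ((hY measurableSet_Iic).nullMeasurableSet)) hanti ⟨0, measure_ne_top μ _⟩
      rw [hI, measure_empty] at ht
      have hev : ∀ᶠ n : ℕ in Filter.atTop, μ {ω | Y ω ≤ -(n:ℝ)} < 1 :=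
        ht.eventually (eventually_lt_nhds (by norm_num))
      exact hev.exists
    obtain ⟨m, hm⟩ := hexm
    have hSbdd : BddBelow S := by
      refine ⟨-(m:ℝ), fun s hs => ?_⟩
      by_contra hcon
      push_neg at hcon
      have : μ {ω | Y ω ≤ s} ≤ μ {ω | Y ω ≤ -(m:ℝ)} := cdf_mono hcon.le
      rw [hs] at this
      exact absurd (lt_of_le_of_lt this hm) (lt_irrefl _)
    set c : ℝ := sInf S with hcdef
    have hc1 : μ {ω | Y ω ≤ c} = 1 := by
      have key : ∀ δ : ℝ, 0 < δ → μ {ω | Y ω ≤ c + δ} = 1 := by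
        intro δ hδ
        obtain ⟨s, hsS, hs⟩ := (csInf_lt_iff hSbdd hSne).1 (lt_add_of_pos_right c hδ)
        exact le_antisymm prob_le_one (hsS ▸ cdf_mono hs.le)
      have hanti : Antitone (fun n : ℕ => {ω | Y ω ≤ c + 1/(n+1)}) := fun m n h =>
        Set.setOf_subset_setOf.2 fun ω hw => le_trans hw (by
          have : (1:ℝ)/(n+1) ≤ 1/(m+1) := by
            apply one_div_le_one_div_of_le (by positivity)
            exact_mod_cast add_le_add_left (by exact_mod_cast h) 1
          linarith)
      have hI : (⋂ n : ℕ, {ω | Y ω ≤ c + 1/(n+1)}) = {ω | Y ω ≤ c} := by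
        ext ω
        simp only [Set.mem_iInter, Set.mem_setOf_eq]
        constructor
        · intro h
          by_contra hcon
          push_neg at hcon
          obtain ⟨n, hn⟩ := exists_nat_one_div_lt (sub_pos.2 hcon)
          have := h n
          have : c + 1/(n+1) < Y ω := by push_cast; push_cast at hn; linarith
          linarith [h n]
        · intro h n; have : (0:ℝ) < 1/(n+1) := by positivity
          linarith
      have ht := tendsto_measure_iInter_atTop (μ := μ)
        (s := fun n : ℕ => {ω | Y ω ≤ c + 1/(n+1)})
        (fun n => ((hY measurableSet_Iic).nullMeasurableSet)) hanti ⟨0, measure_ne_top μ _⟩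
      rw [hI] at ht
      have hconst : (fun n : ℕ => μ {ω | Y ω ≤ c + 1/(n+1)}) = fun _ => 1 :=
        funext fun n => key _ (by positivity)
      have ht2 : Filter.Tendsto (fun _ : ℕ => (1:ℝ≥0∞)) Filter.atTop (𝓝 (μ {ω | Y ω ≤ c})) := by
        rw [← hconst]; exact ht
      exact tendsto_nhds_unique ht2 tendsto_const_nhds
    -- the sets below c
    have hmono' : Monotone (fun n : ℕ => {ω | Y ω ≤ c - 1/(n+1)}) := fun m n h =>
      Set.setOf_subset_setOf.2 fun ω hw => le_trans hw (by
        have : (1:ℝ)/(n+1) ≤ 1/(m+1) := by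
          apply one_div_le_one_div_of_le (by positivity)
          exact_mod_cast add_le_add_left (by exact_mod_cast h) 1
        linarith)
    have hU' : (⋃ n : ℕ, {ω | Y ω ≤ c - 1/(n+1)}) = {ω | Y ω < c} := by
      ext ω
      simp only [Set.mem_iUnion, Set.mem_setOf_eq]
      constructor
      · rintro ⟨n, hn⟩
        have : (0:ℝ) < 1/(n+1) := by positivity
        linarith
      · intro h
        obtain ⟨n, hn⟩ := exists_nat_one_div_lt (sub_pos.2 h)
        exact ⟨n, by push_cast; push_cast at hn; linarith⟩
    have heach : ∀ n : ℕ, μ {ω | Y ω ≤ c - 1/(n+1)} = 0 ∨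
        μ {ω | Y ω ≤ c - 1/(n+1)} = ENNReal.ofReal (1/2) := by
      intro n
      have hlt : c - 1/(n+1) < c := by
        have : (0:ℝ) < 1/(n+1) := by positivity
        linarith
      rcases hcase (c - 1/(n+1)) with h | h | h
      · left
        have := (ENNReal.toReal_eq_zero_iff _).1 h
        rcases this with h' | h'
        · exact h'
        · exact absurd h' (measure_ne_top μ _)
      · right
        rw [← ENNReal.ofReal_toReal (measure_ne_top μ ({ω | Y ω ≤ c - 1/(n+1)}))]
        rw [hqdef] at h
        simp only at h
        rw [h]
      · exfalso
        have : (c - 1/(n+1)) ∈ S := (ENNReal.toReal_eq_one_iff _).1 h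
        have := csInf_le hSbdd this
        rw [← hcdef] at this
        linarith
    have htU := tendsto_measure_iUnion_atTop (μ := μ) hmono'
    rw [hU'] at htU
    by_cases hall : ∀ n : ℕ, μ {ω | Y ω ≤ c - 1/(n+1)} = 0
    · -- Y is a.s. constant = c : contradiction
      exfalso
      have hlt0 : μ {ω | Y ω < c} = 0 := by rw [← hU']; exact measure_iUnion_null hall
      have hsplit : μ {ω | Y ω = c} = 1 := by
        have hsub : {ω | Y ω ≤ c} ⊆ {ω | Y ω < c} ∪ {ω | Y ω = c} := by
          intro ω h; rcases lt_or_eq_of_le (show Y ω ≤ c from h) with h' | h'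
          · exact Or.inl h'
          · exact Or.inr h'
        have h1 : (1:ℝ≥0∞) ≤ μ {ω | Y ω < c} + μ {ω | Y ω = c} :=
          hc1 ▸ le_trans (measure_mono hsub) (measure_union_le _ _)
        rw [hlt0, zero_add] at h1
        exact le_antisymm prob_le_one h1
      have hne : μ {ω | ¬ Y ω = c} = 0 := by
        have : {ω | ¬ Y ω = c} = {ω | Y ω = c}ᶜ := by ext ω; simp
        rw [this, measure_compl (μ := μ) (s := {ω | Y ω = c})
          (by exact hY (measurableSet_singleton c)) (measure_ne_top μ _), hsplit,
          measure_univ, tsub_self]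
      exact hYnd ⟨c, by rw [Filter.EventuallyEq, ae_iff]; exact hne⟩
    · push_neg at hall
      obtain ⟨n0, hn0⟩ := hall
      have hn0v : μ {ω | Y ω ≤ c - 1/(n0+1)} = ENNReal.ofReal (1/2) :=
        (heach n0).resolve_left hn0
      have hevconst : ∀ n ≥ n0, μ {ω | Y ω ≤ c - 1/(n+1)} = ENNReal.ofReal (1/2) := by
        intro n hn
        rcases heach n with h | h
        · exfalso
          have : μ {ω | Y ω ≤ c - 1/(n0+1)} ≤ μ {ω | Y ω ≤ c - 1/(n+1)} :=
            measure_mono (hmono' hn)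
          rw [hn0v, h] at this
          simp [ENNReal.ofReal_eq_zero] at this

        · exact h
      have hltc : μ {ω | Y ω < c} = ENNReal.ofReal (1/2) := by
        have ht2 : Filter.Tendsto (fun n : ℕ => μ {ω | Y ω ≤ c - 1/(n+1)}) Filter.atTop
            (𝓝 (ENNReal.ofReal (1/2))) := by
          refine Filter.Tendsto.congr' ?_ tendsto_const_nhds
          exact (Filter.eventually_atTop.2 ⟨n0, fun n hn => (hevconst n hn).symm⟩)
        exact tendsto_nhds_unique htU ht2
      -- now P(Y<c) = 1/2, P(Y=c)=1/2, mdf at c = 3/4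
      have hPlt : (μ {ω | Y ω < c}).toReal = 1/2 := by
        rw [hltc, ENNReal.toReal_ofReal (by norm_num)]
      have hPeq : (μ {ω | Y ω = c}).toReal = 1/2 := by
        have hd : {ω | Y ω ≤ c} = {ω | Y ω < c} ∪ {ω | Y ω = c} := by
          ext ω; simp [le_iff_lt_or_eq]
        have hdis : Disjoint {ω | Y ω < c} {ω | Y ω = c} := by
          rw [Set.disjoint_left]; intro ω h1 h2; exact absurd h2 (ne_of_lt h1)
        have := measure_union (μ := μ) hdis (hY (measurableSet_singleton c))
        rw [← hd, hc1] at this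
        have htr : (1:ℝ) = (μ {ω | Y ω < c}).toReal + (μ {ω | Y ω = c}).toReal := by
          rw [← ENNReal.toReal_add (measure_ne_top μ _) (measure_ne_top μ _), ← this]
          simp
        rw [hPlt] at htr; linarith
      have hmdfc : mdf μ Y c = 3/4 := by
        rw [mdf, hPlt, hPeq]; norm_num
      refine ⟨{ω | Y ω = c}, 1/4, hY (measurableSet_singleton c), ?_, by norm_num, ?_⟩
      · intro h
        rw [h] at hPeq; simp at hPeq
      · intro ω hω
        have : Y ω = c := hω
        rw [this, hmdfc, show (3:ℝ)/4 - 1/2 = 1/4 by norm_num,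
          abs_of_nonneg (by norm_num : (0:ℝ) ≤ 1/4)]
  · -- Case A : some CDF value in (0,1) different from 1/2
    push_neg at hcase
    obtain ⟨t, h0, hh, h1⟩ := hcase
    have hq0 : 0 < q t := lt_of_le_of_ne ENNReal.toReal_nonneg (Ne.symm h0)
    have hq1 : q t < 1 := lt_of_le_of_ne (hqle1 t) h1
    rcases lt_or_gt_of_ne hh with hlt | hgt
    · refine ⟨{ω | Y ω ≤ t}, 1/2 - q t, hY measurableSet_Iic, ?_, by linarith, ?_⟩
      · intro h
        rw [hqdef] at hq0; simp only at hq0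
        rw [h] at hq0; simp at hq0
      · intro ω hω
        have hYω : Y ω ≤ t := hω
        have h2 : mdf μ Y (Y ω) ≤ q t := by
          refine le_trans (mdf_le_cdf hY (Y ω)) ?_
          exact ENNReal.toReal_mono (measure_ne_top μ _) (cdf_mono hYω)
        refine le_abs.2 (Or.inr ?_)
        linarith
    · refine ⟨{ω | t < Y ω}, q t - 1/2, hY measurableSet_Ioi, ?_, by linarith, ?_⟩
      · intro h
        have hun : (1:ℝ≥0∞) ≤ μ {ω | Y ω ≤ t} + μ {ω | t < Y ω} := by
          have : Set.univ ⊆ {ω | Y ω ≤ t} ∪ {ω | t < Y ω} := by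
            intro ω _; rcases le_or_gt (Y ω) t with h' | h'
            · exact Or.inl h'
            · exact Or.inr h'
          calc (1:ℝ≥0∞) = μ Set.univ := measure_univ.symm
            _ ≤ μ ({ω | Y ω ≤ t} ∪ {ω | t < Y ω}) := measure_mono this
            _ ≤ _ := measure_union_le _ _
        rw [h, add_zero] at hun
        have : q t = 1 := le_antisymm (hqle1 t) (by
          rw [hqdef]
          have := ENNReal.toReal_mono (measure_ne_top μ _) hun
          simpa using this)
        exact h1 this
      · intro ω hω
        have hYω : t < Y ω := hω
        have h2 : q t ≤ mdf μ Y (Y ω) := cdf_le_mdf hY hYω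
        refine le_abs.2 (Or.inl ?_)
        linarith
end D

section E

lemma covar_self_pos (hY : Measurable Y) (hYnd : Nondeg μ Y) :
    0 < covar μ (fun ω => mdf μ Y (Y ω)) (fun ω => mdf μ Y (Y ω)) := by
  obtain ⟨A, ε, hA, hμA, hε, hdev⟩ := exists_dev hY hYnd
  set g : Ω → ℝ := fun ω => mdf μ Y (Y ω) with hgdef
  have hgm : Measurable g := (mdf_measurable hY).comp hY
  have hgb : ∀ x, |g x| ≤ 1 := fun x => abs_mdf_le hY _
  have hgg : Integrable (fun x => g x * g x) μ :=
    bdd_integrable μ (hgm.mul hgm) (fun x => abs_mul_le_one (hgb x) (hgb x))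
  have hg : Integrable g μ := bdd_integrable μ hgm hgb
  have hcv : covar μ g g = ∫ x, (g x - 1/2)^2 ∂μ := by
    have hfe : (fun x => (g x - 1/2)^2) = fun x => (g x * g x - g x) + 1/4 :=
      funext fun x => by ring
    rw [covar, hfe, integral_add (f := fun x => g x * g x - g x) (g := fun _ => (1:ℝ)/4)
      (by exact hgg.sub hg) (integrable_const _),
      integral_sub (f := fun x => g x * g x) (g := g) hgg hg,
      integral_const, mdf_self_integral hY]
    simp only [Measure.real, measure_univ, ENNReal.toReal_one, one_smul, smul_eq_mul]
    ring
  have hsq : Integrable (fun x => (g x - 1/2)^2) μ := by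
    refine bdd_integrable μ (by exact (hgm.sub measurable_const).pow_const 2)
      (C := 9/4) (fun x => ?_)
    have h1 : |g x - 1/2| ≤ 3/2 := by
      have := abs_le.1 (hgb x); rw [abs_le]; constructor <;> [linarith; linarith]
    calc |(g x - 1/2)^2| = |g x - 1/2|^2 := by rw [sq_abs, abs_of_nonneg (sq_nonneg _)]
      _ ≤ (3/2)^2 := pow_le_pow_left₀ (abs_nonneg _) h1 2
      _ = 9/4 := by norm_num
  have hmono : ∫ x, A.indicator (fun _ => ε^2) x ∂μ ≤ ∫ x, (g x - 1/2)^2 ∂μ := by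
    refine integral_mono ((integrable_indicator_iff hA).2
      (integrableOn_const (measure_ne_top μ _))) hsq (fun x => ?_)
    by_cases hx : x ∈ A
    · rw [Set.indicator_of_mem hx]
      calc ε^2 ≤ |g x - 1/2|^2 := pow_le_pow_left₀ hε.le (hdev x hx) 2
        _ = (g x - 1/2)^2 := sq_abs _
    · rw [Set.indicator_of_notMem hx]; exact sq_nonneg _
  have hind : ∫ x, A.indicator (fun _ => ε^2) x ∂μ = (μ A).toReal * ε^2 := by
    rw [integral_indicator_const _ hA]; simp [smul_eq_mul, Measure.real]
  have hpos : 0 < (μ A).toReal * ε^2 :=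
    mul_pos (ENNReal.toReal_pos hμA (measure_ne_top μ _)) (pow_pos hε 2)
  rw [hcv]
  calc (0:ℝ) < (μ A).toReal * ε^2 := hpos
    _ = ∫ x, A.indicator (fun _ => ε^2) x ∂μ := hind.symm
    _ ≤ _ := hmono
end E


/-- `CMA(X,Y)` equals the ratio
`E[(Ḡ(Y'') − Ḡ(Y')) 1{Y' < Y''} s(X',X'')] / E[(Ḡ(Y'') − Ḡ(Y')) 1{Y' < Y''}]`. -/
theorem stmt_5 (μ : Measure Ω) [IsProbabilityMeasure μ] (X Y : Ω → ℝ)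
    (hX : Measurable X) (hY : Measurable Y) (hXnd : Nondeg μ X) (hYnd : Nondeg μ Y) :
    cma μ X Y =
      (∫ p, (mdf μ Y (Y p.2) - mdf μ Y (Y p.1)) * (if Y p.1 < Y p.2 then (1 : ℝ) else 0) *
          simFun (X p.1) (X p.2) ∂(μ.prod μ))
      / (∫ p, (mdf μ Y (Y p.2) - mdf μ Y (Y p.1)) * (if Y p.1 < Y p.2 then (1 : ℝ) else 0)
          ∂(μ.prod μ)) := by
  have hGm : Measurable (fun ω => mdf μ Y (Y ω)) := (mdf_measurable hY).comp hY
  have hFm : Measurable (fun ω => mdf μ X (X ω)) := (mdf_measurable hX).comp hX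
  have hGb : ∀ ω : Ω, |mdf μ Y (Y ω)| ≤ 1 := fun ω => abs_mdf_le hY _
  set EG2 : ℝ := ∫ x, mdf μ Y (Y x) * mdf μ Y (Y x) ∂μ with hEG2
  set EFG : ℝ := ∫ x, mdf μ Y (Y x) * mdf μ X (X x) ∂μ with hEFG
  have ma : Measurable fun p : Ω × Ω => mdf μ Y (Y p.1) := hGm.comp measurable_fst
  have mb : Measurable fun p : Ω × Ω => mdf μ Y (Y p.2) := hGm.comp measurable_snd
  have msy : Measurable fun p : Ω × Ω => simFun (Y p.1) (Y p.2) :=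
    measurable_simFun.comp ((hY.comp measurable_fst).prodMk (hY.comp measurable_snd))
  have msx : Measurable fun p : Ω × Ω => simFun (X p.1) (X p.2) :=
    measurable_simFun.comp ((hX.comp measurable_fst).prodMk (hX.comp measurable_snd))
  have ibsy : Integrable (fun p : Ω × Ω => mdf μ Y (Y p.2) * simFun (Y p.1) (Y p.2)) (μ.prod μ) :=
    bdd_integrable _ (mb.mul msy) (fun p => abs_mul_le_one (hGb _) (abs_simFun_le _ _))
  have iasy : Integrable (fun p : Ω × Ω => mdf μ Y (Y p.1) * simFun (Y p.1) (Y p.2)) (μ.prod μ) :=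
    bdd_integrable _ (ma.mul msy) (fun p => abs_mul_le_one (hGb _) (abs_simFun_le _ _))
  have ibsx : Integrable (fun p : Ω × Ω => mdf μ Y (Y p.2) * simFun (X p.1) (X p.2)) (μ.prod μ) :=
    bdd_integrable _ (mb.mul msx) (fun p => abs_mul_le_one (hGb _) (abs_simFun_le _ _))
  have iasx : Integrable (fun p : Ω × Ω => mdf μ Y (Y p.1) * simFun (X p.1) (X p.2)) (μ.prod μ) :=
    bdd_integrable _ (ma.mul msx) (fun p => abs_mul_le_one (hGb _) (abs_simFun_le _ _))
  have ib : Integrable (fun p : Ω × Ω => mdf μ Y (Y p.2)) (μ.prod μ) :=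
    bdd_integrable _ mb (fun p => hGb _)
  have ia : Integrable (fun p : Ω × Ω => mdf μ Y (Y p.1)) (μ.prod μ) :=
    bdd_integrable _ ma (fun p => hGb _)
  have hbsy : ∫ p, mdf μ Y (Y p.2) * simFun (Y p.1) (Y p.2) ∂(μ.prod μ) = EG2 := by
    have h := swap_int (μ := μ) (fun p : Ω × Ω => mdf μ Y (Y p.1) * simFun (Y p.2) (Y p.1))
    simp only at h
    rw [h, atom1 hGm hGb hY]
  have hexp : ∀ (f : Ω → ℝ), Measurable f → (∀ x, |f x| ≤ 1) →
      ∫ x, mdf μ Y (Y x) * (1 - f x) ∂μ = 1/2 - ∫ x, mdf μ Y (Y x) * f x ∂μ := by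
    intro f hf hfb
    have he : (fun x => mdf μ Y (Y x) * (1 - f x))
        = fun x => mdf μ Y (Y x) - mdf μ Y (Y x) * f x := funext fun x => by ring
    rw [he, integral_sub (g := fun x => mdf μ Y (Y x) * f x) (bdd_integrable μ hGm hGb)
      (bdd_integrable μ (hGm.mul hf) (fun x => abs_mul_le_one (hGb x) (hfb x))),
      mdf_self_integral hY]
  have hasy : ∫ p, mdf μ Y (Y p.1) * simFun (Y p.1) (Y p.2) ∂(μ.prod μ) = 1/2 - EG2 := by
    rw [atom2 hGm hGb hY, hexp _ hGm hGb]
  have hbsx : ∫ p, mdf μ Y (Y p.2) * simFun (X p.1) (X p.2) ∂(μ.prod μ) = EFG := by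
    have h := swap_int (μ := μ) (fun p : Ω × Ω => mdf μ Y (Y p.1) * simFun (X p.2) (X p.1))
    simp only at h
    rw [h, atom1 hGm hGb hX]
  have hasx : ∫ p, mdf μ Y (Y p.1) * simFun (X p.1) (X p.2) ∂(μ.prod μ) = 1/2 - EFG := by
    rw [atom2 hGm hGb hX, hexp _ hFm (fun x => abs_mdf_le hX _)]
  have hfst : ∫ p, mdf μ Y (Y p.1) ∂(μ.prod μ) = 1/2 := by
    rw [fub (fun p : Ω × Ω => mdf μ Y (Y p.1)) (by exact ma) (fun p => hGb _)]
    simp only [integral_const, Measure.real, measure_univ, ENNReal.toReal_one, one_smul]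
    exact mdf_self_integral hY
  have hsnd : ∫ p, mdf μ Y (Y p.2) ∂(μ.prod μ) = 1/2 := by
    have h := swap_int (μ := μ) (fun p : Ω × Ω => mdf μ Y (Y p.1))
    simp only at h
    rw [h, hfst]
  have hD : (∫ p, (mdf μ Y (Y p.2) - mdf μ Y (Y p.1)) *
      (if Y p.1 < Y p.2 then (1:ℝ) else 0) ∂(μ.prod μ)) = 2*EG2 - 1/2 := by
    have hpt : (fun p : Ω × Ω => (mdf μ Y (Y p.2) - mdf μ Y (Y p.1)) *
        (if Y p.1 < Y p.2 then (1:ℝ) else 0))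
        = fun p => mdf μ Y (Y p.2) * simFun (Y p.1) (Y p.2)
          - mdf μ Y (Y p.1) * simFun (Y p.1) (Y p.2) := by
      funext p
      rcases lt_trichotomy (Y p.1) (Y p.2) with h | h | h
      · rw [if_pos h]; unfold simFun; rw [if_pos h, if_neg h.ne]; ring
      · rw [if_neg (not_lt.2 h.ge), h]; ring
      · rw [if_neg (not_lt.2 h.le)]; unfold simFun
        rw [if_neg (not_lt.2 h.le), if_neg h.ne']; ring
    rw [hpt, integral_sub ibsy iasy, hbsy, hasy]; ring
  have hN : (∫ p, (mdf μ Y (Y p.2) - mdf μ Y (Y p.1)) *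
      (if Y p.1 < Y p.2 then (1:ℝ) else 0) * simFun (X p.1) (X p.2) ∂(μ.prod μ))
      = EG2 + EFG - 1/2 := by
    have hpt : (fun p : Ω × Ω => (mdf μ Y (Y p.2) - mdf μ Y (Y p.1)) *
        (if Y p.1 < Y p.2 then (1:ℝ) else 0) * simFun (X p.1) (X p.2))
        = fun p => (mdf μ Y (Y p.2) - mdf μ Y (Y p.1)) * simFun (Y p.1) (Y p.2)
            * simFun (X p.1) (X p.2) := by
      funext p
      rcases lt_trichotomy (Y p.1) (Y p.2) with h | h | h
      · rw [if_pos h]; unfold simFun; rw [if_pos h, if_neg h.ne]; ring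
      · rw [if_neg (not_lt.2 h.ge), h]; ring
      · rw [if_neg (not_lt.2 h.le)]; unfold simFun
        rw [if_neg (not_lt.2 h.le), if_neg h.ne']; ring
    rw [hpt]
    have ifull : Integrable (fun p : Ω × Ω => (mdf μ Y (Y p.2) - mdf μ Y (Y p.1))
        * simFun (Y p.1) (Y p.2) * simFun (X p.1) (X p.2)) (μ.prod μ) := by
      have he : (fun p : Ω × Ω => (mdf μ Y (Y p.2) - mdf μ Y (Y p.1))
          * simFun (Y p.1) (Y p.2) * simFun (X p.1) (X p.2))
          = fun p => mdf μ Y (Y p.2) * simFun (Y p.1) (Y p.2) * simFun (X p.1) (X p.2)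
            - mdf μ Y (Y p.1) * simFun (Y p.1) (Y p.2) * simFun (X p.1) (X p.2) :=
        funext fun p => by ring
      rw [he]
      exact Integrable.sub
        (bdd_integrable _ ((mb.mul msy).mul msx)
          (fun p => abs_mul_le_one (abs_mul_le_one (hGb _) (abs_simFun_le _ _)) (abs_simFun_le _ _)))
        (bdd_integrable _ ((ma.mul msy).mul msx)
          (fun p => abs_mul_le_one (abs_mul_le_one (hGb _) (abs_simFun_le _ _)) (abs_simFun_le _ _)))
    have iswap : Integrable (fun p : Ω × Ω => (mdf μ Y (Y p.1) - mdf μ Y (Y p.2))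
        * simFun (Y p.2) (Y p.1) * simFun (X p.2) (X p.1)) (μ.prod μ) := by
      have msy' : Measurable fun p : Ω × Ω => simFun (Y p.2) (Y p.1) :=
        measurable_simFun.comp ((hY.comp measurable_snd).prodMk (hY.comp measurable_fst))
      have msx' : Measurable fun p : Ω × Ω => simFun (X p.2) (X p.1) :=
        measurable_simFun.comp ((hX.comp measurable_snd).prodMk (hX.comp measurable_fst))
      have he : (fun p : Ω × Ω => (mdf μ Y (Y p.1) - mdf μ Y (Y p.2))
          * simFun (Y p.2) (Y p.1) * simFun (X p.2) (X p.1))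
          = fun p => mdf μ Y (Y p.1) * simFun (Y p.2) (Y p.1) * simFun (X p.2) (X p.1)
            - mdf μ Y (Y p.2) * simFun (Y p.2) (Y p.1) * simFun (X p.2) (X p.1) :=
        funext fun p => by ring
      rw [he]
      exact Integrable.sub
        (bdd_integrable _ ((ma.mul msy').mul msx')
          (fun p => abs_mul_le_one (abs_mul_le_one (hGb _) (abs_simFun_le _ _)) (abs_simFun_le _ _)))
        (bdd_integrable _ ((mb.mul msy').mul msx')
          (fun p => abs_mul_le_one (abs_mul_le_one (hGb _) (abs_simFun_le _ _)) (abs_simFun_le _ _)))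
    have hswap := swap_int (μ := μ) (fun p : Ω × Ω => (mdf μ Y (Y p.2) - mdf μ Y (Y p.1))
      * simFun (Y p.1) (Y p.2) * simFun (X p.1) (X p.2))
    simp only at hswap
    have hNN : (∫ p, ((mdf μ Y (Y p.2) - mdf μ Y (Y p.1)) * simFun (Y p.1) (Y p.2)
          * simFun (X p.1) (X p.2)
        + (mdf μ Y (Y p.1) - mdf μ Y (Y p.2)) * simFun (Y p.2) (Y p.1)
          * simFun (X p.2) (X p.1)) ∂(μ.prod μ))
        = (∫ p, (mdf μ Y (Y p.2) - mdf μ Y (Y p.1)) * simFun (Y p.1) (Y p.2)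
            * simFun (X p.1) (X p.2) ∂(μ.prod μ))
        + (∫ p, (mdf μ Y (Y p.2) - mdf μ Y (Y p.1)) * simFun (Y p.1) (Y p.2)
            * simFun (X p.1) (X p.2) ∂(μ.prod μ)) := by
      rw [integral_add ifull iswap, hswap]
    have hsum : (∫ p, ((mdf μ Y (Y p.2) - mdf μ Y (Y p.1)) * simFun (Y p.1) (Y p.2)
          * simFun (X p.1) (X p.2)
        + (mdf μ Y (Y p.1) - mdf μ Y (Y p.2)) * simFun (Y p.2) (Y p.1)
          * simFun (X p.2) (X p.1)) ∂(μ.prod μ)) = 2*EG2 + 2*EFG - 1 := by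
      have hpt2 : (fun p : Ω × Ω => (mdf μ Y (Y p.2) - mdf μ Y (Y p.1)) * simFun (Y p.1) (Y p.2)
            * simFun (X p.1) (X p.2)
          + (mdf μ Y (Y p.1) - mdf μ Y (Y p.2)) * simFun (Y p.2) (Y p.1)
            * simFun (X p.2) (X p.1))
          = fun p => (mdf μ Y (Y p.2) * simFun (Y p.1) (Y p.2)
              - mdf μ Y (Y p.1) * simFun (Y p.1) (Y p.2))
            + (mdf μ Y (Y p.2) * simFun (X p.1) (X p.2)
              - mdf μ Y (Y p.1) * simFun (X p.1) (X p.2))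
            - (mdf μ Y (Y p.2) - mdf μ Y (Y p.1)) := by
        funext p
        have e1 : simFun (Y p.2) (Y p.1) = 1 - simFun (Y p.1) (Y p.2) := by
          linarith [simFun_add (Y p.1) (Y p.2)]
        have e2 : simFun (X p.2) (X p.1) = 1 - simFun (X p.1) (X p.2) := by
          linarith [simFun_add (X p.1) (X p.2)]
        rw [e1, e2]; ring
      rw [hpt2, integral_sub (by exact (ibsy.sub iasy).add (ibsx.sub iasx)) (by exact ib.sub ia),
        integral_add (by exact ibsy.sub iasy) (by exact ibsx.sub iasx),
        integral_sub ibsy iasy, integral_sub ibsx iasx, integral_sub ib ia,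
        hbsy, hasy, hbsx, hasx, hfst, hsnd]
      ring
    rw [hsum] at hNN
    linarith
  have hV := covar_self_pos hY hYnd
  have hcovG : covar μ (fun ω => mdf μ Y (Y ω)) (fun ω => mdf μ Y (Y ω)) = EG2 - 1/4 := by
    rw [covar, mdf_self_integral hY, ← hEG2]; ring
  have hcovFG : covar μ (fun ω => mdf μ X (X ω)) (fun ω => mdf μ Y (Y ω)) = EFG - 1/4 := by
    rw [covar, mdf_self_integral hY, mdf_self_integral hX]
    have hc : ∫ ω, mdf μ X (X ω) * mdf μ Y (Y ω) ∂μ = EFG := by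
      rw [hEFG]
      exact integral_congr_ae (Filter.Eventually.of_forall fun ω => mul_comm _ _)
    rw [hc]; ring
  rw [hD, hN, cma, agc, hcovG, hcovFG]
  rw [hcovG] at hV
  have h1 : EG2 - 1/4 ≠ 0 := ne_of_gt hV
  have h2 : 2*EG2 - 1/2 ≠ 0 := by intro h; apply h1; linarith
  rw [div_add' _ _ _ h1, div_div, div_eq_div_iff (by
    intro h; apply h1; rcases mul_eq_zero.1 h with h' | h'
    · exact h'
    · norm_num at h') h2]
  ring


end
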